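/- The trace maps N_l : (V^⊗l)_{Z/lZ} → (V^⊗l)^{Z/lZ}, induced by α ↦ Σ_{r=0}^{l−1} σ^r(α), satisfy N(P₊(V)) ⊆ ⊕_l P_{l,+}, where P₊(V) is the +1 eigenspace of ι on L(V) and P_{l,+} the +1 eigenspace of ι on V^⊗l. Consequently, when dim V = 2 with basis {x, y}, if α represents a class in P₊(V) and N(α) = x p_α − y q_α, then p_α and q_α lie in ⊕_l P_{l,−}. -/

import Mathlib

/-!
We identify the `l`-th tensor power `V^{⊗l}` of a vector space `V` with a
distinguished basis indexed by `ι` with the space of noncommutative homogeneous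
polynomials of degree `l` in the variables `ι`, i.e. with formal `K`-linear
combinations of words of length `l` in the alphabet `ι`.
-/

noncomputable section

/-- Homogeneous noncommutative polynomials of degree `l` in variables `ι`
(the `l`-th tensor power of the vector space with basis `ι`). -/
abbrev PolyH (K : Type*) [Field K] (ι : Type*) (l : ℕ) : Type _ := (Fin l → ι) →₀ K

variable {K : Type*} [Field K] {ι : Type*}

/-- The cyclic shift `σ` (generator of `ℤ/lℤ`), permuting tensor factors
cyclically: `α₁ ⊗ α₂ ⊗ ⋯ ⊗ α_l ↦ α₂ ⊗ ⋯ ⊗ α_l ⊗ α₁`. -/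
def rotP {l : ℕ} : PolyH K ι l →ₗ[K] PolyH K ι l :=
  Finsupp.lmapDomain K K fun w => w ∘ finRotate l

/-- Reversal of tensor factors: `α₁ ⊗ ⋯ ⊗ α_l ↦ α_l ⊗ ⋯ ⊗ α₁`
(the unsigned involution `I`). -/
def revP {l : ℕ} : PolyH K ι l →ₗ[K] PolyH K ι l :=
  Finsupp.lmapDomain K K fun w => w ∘ Fin.rev

/-- The involution `ι(α₁ ⊗ ⋯ ⊗ α_l) = (-1)^l · α_l ⊗ ⋯ ⊗ α₁`. -/
def iotaP {l : ℕ} : PolyH K ι l →ₗ[K] PolyH K ι l :=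
  ((-1 : K) ^ l) • revP

/-- `x_i ⊗ (-)` : prepend the letter `i`, `p ↦ x_i ⊗ p`. -/
def consP (i : ι) {l : ℕ} : PolyH K ι l →ₗ[K] PolyH K ι (l + 1) :=
  Finsupp.lmapDomain K K fun w => Fin.cons i w

/-- `(-) ⊗ x_i` : append the letter `i`, `p ↦ p ⊗ x_i`. -/
def snocP (i : ι) {l : ℕ} : PolyH K ι l →ₗ[K] PolyH K ι (l + 1) :=
  Finsupp.lmapDomain K K fun w => Fin.snoc w i

/-- The trace `N = Σ_{r=0}^{l-1} σ^r` of the cyclic action on `V^{⊗l}`. -/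
def NP {l : ℕ} : PolyH K ι l →ₗ[K] PolyH K ι l :=
  ∑ r ∈ Finset.range l, (rotP : Module.End K (PolyH K ι l)) ^ r

/-- Evaluation of a noncommutative homogeneous polynomial at the tuple `X`
of elements of an associative `K`-algebra `A`. -/
def evalP {l : ℕ} {A : Type*} [Ring A] [Algebra K A] (X : ι → A)
    (p : PolyH K ι l) : A :=
  p.sum fun w c => c • (List.ofFn fun k => X (w k)).prod

/-- The word `D_{i,i}(w) = w_{i+1} ⋯ w_{i-1}` (cyclically, omitting the
letter `w_i`). -/
def dwP {n : ℕ} (w : Fin (n + 1) → ι) (i : Fin (n + 1)) : Fin n → ι :=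
  fun k => w (i + k.succ)

-- helpers
lemma rotP_single {l : ℕ} (w : Fin l → ι) (c : K) :
    rotP (Finsupp.single w c) = Finsupp.single (w ∘ finRotate l) c := by
  simp [rotP, Finsupp.mapDomain_single]

lemma revP_single {l : ℕ} (w : Fin l → ι) (c : K) :
    revP (Finsupp.single w c) = Finsupp.single (w ∘ Fin.rev) c := by
  simp [revP, Finsupp.mapDomain_single]

lemma rotP_pow_single {l : ℕ} (r : ℕ) (w : Fin l → ι) (c : K) :
    ((rotP : Module.End K (PolyH K ι l)) ^ r) (Finsupp.single w c)
      = Finsupp.single (w ∘ (finRotate l)^[r]) c := by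
  induction r generalizing w with
  | zero => simp
  | succ r ih =>
    rw [pow_succ, Module.End.mul_apply, rotP_single, ih]
    congr 1
    ext k
    simp only [Function.comp_apply, Function.iterate_succ_apply, Function.iterate_succ_apply',
      Equiv.Perm.iterate_eq_pow]
    rw [← Equiv.Perm.mul_apply, ← pow_succ']

open Fin.NatCast Fin.CommRing in
lemma finRotate_iter {n : ℕ} (r : ℕ) (k : Fin (n + 1)) :
    (finRotate (n + 1))^[r] k = k + (r : Fin (n+1)) := by
  induction r with
  | zero => simp
  | succ r ih =>
    rw [Function.iterate_succ_apply', ih, finRotate_succ_apply]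
    push_cast
    ring

lemma rotP_pow_card {n : ℕ} :
    (rotP : Module.End K (PolyH K ι (n + 1))) ^ (n + 1) = 1 := by
  apply Finsupp.lhom_ext
  intro w c
  rw [rotP_pow_single]
  simp only [Module.End.one_apply]
  congr 1
  ext k
  simp only [Function.comp_apply, finRotate_iter, Fin.natCast_self, add_zero]

lemma rotP_pow_mod {n : ℕ} (a : ℕ) :
    (rotP : Module.End K (PolyH K ι (n + 1))) ^ a = rotP ^ (a % (n + 1)) := by
  conv_lhs => rw [← Nat.div_add_mod a (n + 1)]
  rw [pow_add, pow_mul, rotP_pow_card, one_pow, one_mul]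

open Fin.NatCast Fin.CommRing in
lemma rev_add_one {n : ℕ} (k : Fin (n + 1)) :
    k.rev + 1 = (k + (n : Fin (n + 1))).rev := by
  rcases n with _ | m
  · exact Subsingleton.elim (α := Fin 1) _ _
  have hk : k.val ≤ m + 1 := Fin.is_le k
  apply Fin.ext
  simp only [Fin.val_rev, Fin.val_add, Fin.val_natCast, Fin.val_one]
  have h1 : (m + 1) % (m + 2) = m + 1 := Nat.mod_eq_of_lt (by omega)
  rw [h1]
  rcases Nat.eq_zero_or_pos k.val with h | h
  · have e1 : m + 1 + 1 - (k.val + 1) + 1 = m + 2 := by omega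
    have e2 : k.val + (m + 1) = m + 1 := by omega
    rw [e1, e2, Nat.mod_self, Nat.mod_eq_of_lt (show m + 1 < m + 2 by omega)]
    omega
  · have e2 : (k.val + (m + 1)) % (m + 2) = k.val - 1 := by
      have e : k.val + (m + 1) = (m + 2) + (k.val - 1) := by omega
      rw [e, Nat.add_mod_left, Nat.mod_eq_of_lt (by omega)]
    rw [e2, Nat.mod_eq_of_lt (by omega)]
    omega

lemma revP_mul_rotP {n : ℕ} :
    (revP : Module.End K (PolyH K ι (n + 1))) * rotP = rotP ^ n * revP := by
  apply Finsupp.lhom_ext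
  intro w c
  rw [Module.End.mul_apply, Module.End.mul_apply, rotP_single, revP_single, revP_single,
    rotP_pow_single]
  congr 1
  ext k
  simp only [Function.comp_apply, finRotate_iter, finRotate_succ_apply]
  rw [rev_add_one]

lemma modstep (n r : ℕ) (h : r ≤ n) :
    ((n + 1 - r) % (n + 1) + n) % (n + 1) = (n + 1 - (r + 1)) % (n + 1) := by
  rcases Nat.eq_zero_or_pos r with h0 | h0
  · subst h0
    rw [Nat.sub_zero, Nat.mod_self, Nat.zero_add]
    have e : n + 1 - (0 + 1) = n := by omega
    rw [e]
  · have e1 : (n + 1 - r) % (n + 1) = n + 1 - r := Nat.mod_eq_of_lt (by omega)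
    have e2 : n + 1 - r + n = (n + 1) + (n - r) := by omega
    rw [e1, e2, Nat.add_mod_left]
    congr 1
    omega

lemma revP_mul_rotP_pow {n : ℕ} :
    ∀ r, r ≤ n → (revP : Module.End K (PolyH K ι (n + 1))) * rotP ^ r
      = rotP ^ ((n + 1 - r) % (n + 1)) * revP := by
  intro r
  induction r with
  | zero => intro _; simp [Nat.mod_self]
  | succ r ih =>
    intro hr
    have h1 : r ≤ n := by omega
    rw [pow_succ, ← mul_assoc, ih h1, mul_assoc, revP_mul_rotP, ← mul_assoc, ← pow_add,
      rotP_pow_mod, modstep n r h1]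

lemma einv (n r : ℕ) (h : r ≤ n) :
    (n + 1 - (n + 1 - r) % (n + 1)) % (n + 1) = r := by
  rcases Nat.eq_zero_or_pos r with h0 | h0
  · subst h0
    rw [Nat.sub_zero, Nat.mod_self, Nat.sub_zero, Nat.mod_self]
  · have e1 : (n + 1 - r) % (n + 1) = n + 1 - r := Nat.mod_eq_of_lt (by omega)
    rw [e1]
    have e2 : n + 1 - (n + 1 - r) = r := by omega
    rw [e2, Nat.mod_eq_of_lt (by omega)]

lemma revP_mul_NP {n : ℕ} :
    (revP : Module.End K (PolyH K ι (n + 1))) * NP = NP * revP := by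
  have hNP : (NP : Module.End K (PolyH K ι (n + 1))) = ∑ r ∈ Finset.range (n + 1), rotP ^ r :=
    rfl
  rw [hNP, Finset.mul_sum, Finset.sum_mul]
  calc ∑ r ∈ Finset.range (n + 1), (revP : Module.End K (PolyH K ι (n + 1))) * rotP ^ r
      = ∑ r ∈ Finset.range (n + 1), rotP ^ ((n + 1 - r) % (n + 1)) * revP :=
        Finset.sum_congr rfl fun r hr =>
          revP_mul_rotP_pow r (Nat.lt_succ_iff.mp (Finset.mem_range.mp hr))
    _ = ∑ r ∈ Finset.range (n + 1), rotP ^ r * revP := by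
        apply Finset.sum_nbij' (i := fun r => (n + 1 - r) % (n + 1))
          (j := fun r => (n + 1 - r) % (n + 1))
        · intro a ha
          exact Finset.mem_range.mpr (Nat.mod_lt _ (by omega))
        · intro a ha
          exact Finset.mem_range.mpr (Nat.mod_lt _ (by omega))
        · intro a ha
          exact einv n a (Nat.lt_succ_iff.mp (Finset.mem_range.mp ha))
        · intro a ha
          exact einv n a (Nat.lt_succ_iff.mp (Finset.mem_range.mp ha))
        · intro a ha
          rfl

lemma inv1 (n r : ℕ) (h : r ≤ n) : ((r + 1) % (n + 1) + n) % (n + 1) = r := by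
  rcases Nat.lt_or_ge r n with h0 | h0
  · have e0 : (r + 1) % (n + 1) = r + 1 := Nat.mod_eq_of_lt (by omega)
    have e : r + 1 + n = (n + 1) + r := by omega
    rw [e0, e, Nat.add_mod_left, Nat.mod_eq_of_lt (by omega)]
  · have e : r = n := by omega
    subst e
    rw [Nat.mod_self, Nat.zero_add, Nat.mod_eq_of_lt (by omega)]

lemma inv2 (n r : ℕ) (h : r ≤ n) : ((r + n) % (n + 1) + 1) % (n + 1) = r := by
  rcases Nat.eq_zero_or_pos r with h0 | h0
  · subst h0
    have e0 : n % (n + 1) = n := Nat.mod_eq_of_lt (by omega)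
    rw [Nat.zero_add, e0, Nat.mod_self]
  · have e : r + n = (n + 1) + (r - 1) := by omega
    have e0 : (r - 1) % (n + 1) = r - 1 := Nat.mod_eq_of_lt (by omega)
    have e2 : r - 1 + 1 = r := by omega
    rw [e, Nat.add_mod_left, e0, e2, Nat.mod_eq_of_lt (by omega)]

lemma NP_mul_rotP {n : ℕ} :
    (NP : Module.End K (PolyH K ι (n + 1))) * rotP = NP := by
  have hNP : (NP : Module.End K (PolyH K ι (n + 1))) = ∑ r ∈ Finset.range (n + 1), rotP ^ r :=
    rfl
  rw [hNP, Finset.sum_mul]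
  have h1 : ∑ r ∈ Finset.range (n + 1), (rotP : Module.End K (PolyH K ι (n + 1))) ^ r * rotP
      = ∑ r ∈ Finset.range (n + 1), rotP ^ (r + 1) :=
    Finset.sum_congr rfl fun r _ => (pow_succ _ _).symm
  rw [h1]
  apply Finset.sum_nbij' (i := fun r => (r + 1) % (n + 1)) (j := fun r => (r + n) % (n + 1))
  · intro a _
    exact Finset.mem_range.mpr (Nat.mod_lt _ (by omega))
  · intro a _
    exact Finset.mem_range.mpr (Nat.mod_lt _ (by omega))
  · intro a ha
    exact inv1 n a (Nat.lt_succ_iff.mp (Finset.mem_range.mp ha))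
  · intro a ha
    exact inv2 n a (Nat.lt_succ_iff.mp (Finset.mem_range.mp ha))
  · intro a _
    exact rotP_pow_mod (a + 1)

lemma rotP_mul_NP {n : ℕ} :
    (rotP : Module.End K (PolyH K ι (n + 1))) * NP = NP := by
  have hNP : (NP : Module.End K (PolyH K ι (n + 1))) = ∑ r ∈ Finset.range (n + 1), rotP ^ r :=
    rfl
  rw [hNP, Finset.mul_sum]
  have h1 : ∑ r ∈ Finset.range (n + 1), (rotP : Module.End K (PolyH K ι (n + 1))) * rotP ^ r
      = ∑ r ∈ Finset.range (n + 1), rotP ^ (r + 1) :=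
    Finset.sum_congr rfl fun r _ => (pow_succ' _ _).symm
  rw [h1]
  apply Finset.sum_nbij' (i := fun r => (r + 1) % (n + 1)) (j := fun r => (r + n) % (n + 1))
  · intro a _
    exact Finset.mem_range.mpr (Nat.mod_lt _ (by omega))
  · intro a _
    exact Finset.mem_range.mpr (Nat.mod_lt _ (by omega))
  · intro a ha
    exact inv1 n a (Nat.lt_succ_iff.mp (Finset.mem_range.mp ha))
  · intro a ha
    exact inv2 n a (Nat.lt_succ_iff.mp (Finset.mem_range.mp ha))
  · intro a _
    exact rotP_pow_mod (a + 1)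

lemma iotaP_mul_NP {n : ℕ} :
    (iotaP : Module.End K (PolyH K ι (n + 1))) * NP = NP * iotaP := by
  show (((-1 : K) ^ (n + 1)) • (revP : Module.End K (PolyH K ι (n + 1)))) * NP
      = NP * (((-1 : K) ^ (n + 1)) • revP)
  rw [smul_mul_assoc, revP_mul_NP, mul_smul_comm]

lemma rotP_consP {m : ℕ} (i : ι) (u : PolyH K ι m) : rotP (consP i u) = snocP i u := by
  have h : (rotP ∘ₗ consP i : PolyH K ι m →ₗ[K] PolyH K ι (m + 1)) = snocP i := by
    apply Finsupp.lhom_ext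
    intro w c
    rw [LinearMap.comp_apply]
    show rotP ((consP i) (Finsupp.single w c)) = _
    rw [show ((consP i) (Finsupp.single w c) : PolyH K ι (m + 1))
        = Finsupp.single (Fin.cons i w) c from Finsupp.mapDomain_single, rotP_single]
    rw [show ((snocP i) (Finsupp.single w c) : PolyH K ι (m + 1))
        = Finsupp.single (Fin.snoc w i) c from Finsupp.mapDomain_single]
    congr 1
    ext k
    refine Fin.lastCases ?_ ?_ k
    · simp [finRotate_last, Fin.snoc_last]
    · intro j
      simp only [Function.comp_apply, finRotate_succ_apply, Fin.coeSucc_eq_succ,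
        Fin.cons_succ, Fin.snoc_castSucc]
  exact DFunLike.congr_fun h u

lemma revP_consP {m : ℕ} (i : ι) (u : PolyH K ι m) : revP (consP i u) = snocP i (revP u) := by
  have h : (revP ∘ₗ consP i : PolyH K ι m →ₗ[K] PolyH K ι (m + 1)) = snocP i ∘ₗ revP := by
    apply Finsupp.lhom_ext
    intro w c
    rw [LinearMap.comp_apply, LinearMap.comp_apply]
    rw [show ((consP i) (Finsupp.single w c) : PolyH K ι (m + 1))
        = Finsupp.single (Fin.cons i w) c from Finsupp.mapDomain_single, revP_single,
      revP_single]
    rw [show ((snocP i) (Finsupp.single (w ∘ Fin.rev) c) : PolyH K ι (m + 1))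
        = Finsupp.single (Fin.snoc (w ∘ Fin.rev) i) c from Finsupp.mapDomain_single]
    congr 1
    ext k
    refine Fin.lastCases ?_ ?_ k
    · simp [Fin.rev_last, Fin.snoc_last]
    · intro j
      simp only [Function.comp_apply, Fin.rev_castSucc, Fin.cons_succ, Fin.snoc_castSucc]
  exact DFunLike.congr_fun h u

lemma iotaP_consP {m : ℕ} (i : ι) (u : PolyH K ι m) :
    iotaP (consP i u) = -(snocP i (iotaP u)) := by
  show (((-1 : K) ^ (m + 1)) • (revP : Module.End K (PolyH K ι (m + 1)))) (consP i u)
      = -(snocP i ((((-1 : K) ^ m) • (revP : Module.End K (PolyH K ι m))) u))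
  rw [LinearMap.smul_apply, LinearMap.smul_apply, map_smul, revP_consP, pow_succ, mul_comm,
    mul_smul, neg_one_smul]

lemma snocP_apply_snoc_same {m : ℕ} (i : ι) (u : PolyH K ι m) (w : Fin m → ι) :
    (snocP i u) (Fin.snoc w i) = u w := by
  have hinj : Function.Injective (fun v : Fin m → ι => (Fin.snoc v i : Fin (m + 1) → ι)) := by
    intro a b hab
    have := congrArg Fin.init hab
    simpa [Fin.init_snoc] using this
  exact Finsupp.mapDomain_apply hinj u w

lemma snocP_apply_snoc_ne {m : ℕ} {i j : ι} (hij : i ≠ j) (u : PolyH K ι m) (w : Fin m → ι) :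
    (snocP i u) (Fin.snoc w j) = 0 := by
  apply Finsupp.mapDomain_notin_range
  rintro ⟨v, hv⟩
  apply hij
  have := congrArg (fun f => f (Fin.last m)) hv
  simpa [Fin.snoc_last] using this

lemma part1_aux {K : Type*} [Field K] (ι : Type*) (l : ℕ) (α : PolyH K ι (l + 2))
    (hα : iotaP α - α ∈ Submodule.span K {z | ∃ t : PolyH K ι (l + 2), z = rotP t - t}) :
    iotaP (NP α) = NP α := by
  have hker : Submodule.span K {z | ∃ t : PolyH K ι (l + 2), z = rotP t - t}
      ≤ LinearMap.ker (NP : PolyH K ι (l + 2) →ₗ[K] PolyH K ι (l + 2)) := by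
    rw [Submodule.span_le]
    rintro z ⟨t, rfl⟩
    simp only [SetLike.mem_coe, LinearMap.mem_ker, map_sub, sub_eq_zero]
    exact DFunLike.congr_fun (NP_mul_rotP (n := l + 1)) t
  have h0 : NP (iotaP α) = NP α := by
    have h := hker hα
    rw [LinearMap.mem_ker, map_sub, sub_eq_zero] at h
    exact h
  calc iotaP (NP α) = NP (iotaP α) := DFunLike.congr_fun (iotaP_mul_NP (n := l + 1)) α
    _ = NP α := h0

/-- The trace maps
`N_l : (V^{⊗l})_{ℤ/lℤ} → (V^{⊗l})^{ℤ/lℤ}`, induced by `α ↦ Σ_{r<l} σ^r(α)`,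
satisfy `N(P₊(V)) ⊆ ⊕_l P_{l,+}`: if the class `ᾱ` of `α ∈ V^{⊗(l+2)}` lies in
the `+1`-eigenspace of `ι` on the coinvariants (i.e. `ι(α) - α` lies in the
span of the elements `σ(t) - t`), then `ι(N(α)) = N(α)`.  Consequently, when
`dim V = 2` with basis `{x, y}` (`x = 0`, `y = 1`), if `ᾱ ∈ P₊(V)` and
`N(α) = x ⊗ p_α - y ⊗ q_α`, then `p_α` and `q_α` lie in the `-1`-eigenspaces
`P_{l+1,-}`. -/
theorem trace_of_Pplus
    {K : Type*} [Field K] :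
    (∀ (ι : Type*) (l : ℕ) (α : PolyH K ι (l + 2)),
      iotaP α - α ∈
          Submodule.span K {z | ∃ t : PolyH K ι (l + 2), z = rotP t - t} →
      iotaP (NP α) = NP α) ∧
    (∀ (l : ℕ) (α : PolyH K (Fin 2) (l + 2)) (p q : PolyH K (Fin 2) (l + 1)),
      iotaP α - α ∈
          Submodule.span K {z | ∃ t : PolyH K (Fin 2) (l + 2), z = rotP t - t} →
      NP α = consP 0 p - consP 1 q →
      iotaP p = -p ∧ iotaP q = -q) := by
  refine ⟨fun ι l α hα => part1_aux ι l α hα, ?_⟩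
  intro l α p q hα hN
  have h1 : iotaP (NP α) = NP α := part1_aux (Fin 2) l α hα
  have hrot : rotP (NP α) = NP α := DFunLike.congr_fun (rotP_mul_NP (n := l + 1)) α
  have hA : NP α = snocP 0 p - snocP 1 q := by
    rw [← hrot, hN, map_sub, rotP_consP, rotP_consP]
  have hB : iotaP (NP α) = -(snocP 0 (iotaP p)) + snocP 1 (iotaP q) := by
    rw [hN, map_sub, iotaP_consP, iotaP_consP, sub_neg_eq_add]
  have hE : -(snocP (0 : Fin 2) (iotaP p)) + snocP 1 (iotaP q) = snocP 0 p - snocP 1 q := by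
    rw [← hB, h1, hA]
  have h2 : snocP (0 : Fin 2) (p + iotaP p) = snocP 1 (iotaP q + q) := by
    rw [map_add, map_add, ← sub_eq_zero]
    have e : (snocP (0 : Fin 2) p + snocP 0 (iotaP p)) - (snocP 1 (iotaP q) + snocP 1 q)
        = -((-(snocP (0 : Fin 2) (iotaP p)) + snocP 1 (iotaP q)) - (snocP 0 p - snocP 1 q)) := by
      abel
    rw [e, sub_eq_zero_of_eq hE, neg_zero]
  have hp : p + iotaP p = 0 := by
    ext w
    have h3 := DFunLike.congr_fun h2 (Fin.snoc w (0 : Fin 2))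
    rw [snocP_apply_snoc_same] at h3
    rw [snocP_apply_snoc_ne (by decide : (1 : Fin 2) ≠ 0)] at h3
    simpa using h3
  have hq : iotaP q + q = 0 := by
    ext w
    have h3 := DFunLike.congr_fun h2 (Fin.snoc w (1 : Fin 2))
    rw [snocP_apply_snoc_same] at h3
    rw [snocP_apply_snoc_ne (by decide : (0 : Fin 2) ≠ 1)] at h3
    simpa using h3.symm
  exact ⟨eq_neg_of_add_eq_zero_right hp, eq_neg_of_add_eq_zero_left hq⟩

end
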